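/- arXiv:1802.04704 — 4 statements merged into one kernel-verified Lean document; each statement's English description precedes it below -/
import Mathlib

section
/- If the nested sequent ∅⊢∅,[Υ1],…,[Υn] (whose root node has empty antecedent and succedent and carries the nestings Υ1,…,Υn) is derivable in NS_mLJ, then the nested sequent ∅⊢∅,[Υi] is derivable in NS_mLJ for some i∈{1,…,n}. -/
/- No rule has its principal formula at a root with empty antecedent and succedent, so every
rule applied to `∅ ⊢ ∅, [Υ₁], …, [Υₙ]` acts inside one nesting `Υᵢ` and leaves the others
untouched. By induction on the derivation, some nesting is derivable on its own: either one
of the untouched nestings already is, or every premise yields the rewritten `Υᵢ`, and the same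
rule applied under the root `∅ ⊢ ∅, [·]` derives `Υᵢ`. -/

/-- Intuitionistic propositional formulas. -/
inductive IForm : Type
  | atom : ℕ → IForm
  | bot  : IForm
  | and  : IForm → IForm → IForm
  | or   : IForm → IForm → IForm
  | imp  : IForm → IForm → IForm

/-- Nested sequents: a tree of two-sided sequents of finite multisets. -/
inductive NS : Type
  | node : Multiset IForm → Multiset IForm → List NS → NS

/-- A context selecting one node inside a nested sequent; `fill` plugs a
nested sequent into the selected position. -/
inductive NSCtx : Type
  | hole : NSCtx
  | child : Multiset IForm → Multiset IForm → List NS → NSCtx → List NS → NSCtx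

def NSCtx.fill : NSCtx → NS → NS
  | .hole, t => t
  | .child Γ Δ L₁ C L₂, t => .node Γ Δ (L₁ ++ C.fill t :: L₂)

/-- Derivability in the nested system `NS_mLJ`, indexed by the height of the
derivation: rules may be applied at any node of the nested sequent. -/
inductive NSDeriv : ℕ → NS → Prop
  | init (C : NSCtx) (Γ Δ : Multiset IForm) (Λ : List NS) (p : ℕ) :
      NSDeriv 0 (C.fill (.node (IForm.atom p ::ₘ Γ) (IForm.atom p ::ₘ Δ) Λ))
  | botL (C : NSCtx) (Γ Δ : Multiset IForm) (Λ : List NS) :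
      NSDeriv 0 (C.fill (.node (IForm.bot ::ₘ Γ) Δ Λ))
  | andL {n : ℕ} (C : NSCtx) (Γ Δ : Multiset IForm) (Λ : List NS) (A B : IForm) :
      NSDeriv n (C.fill (.node (A ::ₘ B ::ₘ Γ) Δ Λ)) →
      NSDeriv (n + 1) (C.fill (.node (A.and B ::ₘ Γ) Δ Λ))
  | andR {n m : ℕ} (C : NSCtx) (Γ Δ : Multiset IForm) (Λ : List NS) (A B : IForm) :
      NSDeriv n (C.fill (.node Γ (A ::ₘ Δ) Λ)) →
      NSDeriv m (C.fill (.node Γ (B ::ₘ Δ) Λ)) →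
      NSDeriv (max n m + 1) (C.fill (.node Γ (A.and B ::ₘ Δ) Λ))
  | orL {n m : ℕ} (C : NSCtx) (Γ Δ : Multiset IForm) (Λ : List NS) (A B : IForm) :
      NSDeriv n (C.fill (.node (A ::ₘ Γ) Δ Λ)) →
      NSDeriv m (C.fill (.node (B ::ₘ Γ) Δ Λ)) →
      NSDeriv (max n m + 1) (C.fill (.node (A.or B ::ₘ Γ) Δ Λ))
  | orR {n : ℕ} (C : NSCtx) (Γ Δ : Multiset IForm) (Λ : List NS) (A B : IForm) :
      NSDeriv n (C.fill (.node Γ (A ::ₘ B ::ₘ Δ) Λ)) →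
      NSDeriv (n + 1) (C.fill (.node Γ (A.or B ::ₘ Δ) Λ))
  | impL {n m : ℕ} (C : NSCtx) (Γ Δ : Multiset IForm) (Λ : List NS) (A B : IForm) :
      NSDeriv n (C.fill (.node (A.imp B ::ₘ Γ) (A ::ₘ Δ) Λ)) →
      NSDeriv m (C.fill (.node (B ::ₘ Γ) Δ Λ)) →
      NSDeriv (max n m + 1) (C.fill (.node (A.imp B ::ₘ Γ) Δ Λ))
  | impR {n : ℕ} (C : NSCtx) (Γ Δ : Multiset IForm) (Λ : List NS) (A B : IForm) :
      NSDeriv n (C.fill (.node Γ Δ (Λ ++ [NS.node {A} {B} []]))) →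
      NSDeriv (n + 1) (C.fill (.node Γ (A.imp B ::ₘ Δ) Λ))
  | lift {n : ℕ} (C : NSCtx) (Γ Δ Γ' Δ' : Multiset IForm) (Λ₁ Λ₂ Λ' : List NS) (A : IForm) :
      NSDeriv n (C.fill (.node (A ::ₘ Γ) Δ (Λ₁ ++ NS.node (A ::ₘ Γ') Δ' Λ' :: Λ₂))) →
      NSDeriv (n + 1) (C.fill (.node (A ::ₘ Γ) Δ (Λ₁ ++ NS.node Γ' Δ' Λ' :: Λ₂)))

def NS.Derivable (S : NS) : Prop := ∃ n, NSDeriv n S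

def NS.NestingDisjunction (S : NS) : Prop :=
  ∀ L, S = .node 0 0 L → ∃ G ∈ L, (NS.node 0 0 [G]).Derivable

lemma NSCtx.eq_child_of_fill_eq_node {C : NSCtx} {s : NS} {L : List NS}
    (h : C.fill s = .node 0 0 L) (hs : ∀ Λ, s ≠ .node 0 0 Λ) :
    ∃ L₁ C' L₂, C = .child 0 0 L₁ C' L₂ := by
  cases C with
  | hole => exact absurd h (hs L)
  | child Γ Δ L₁ C' L₂ =>
    simp only [NSCtx.fill, NS.node.injEq] at h
    exact ⟨L₁, C', L₂, by rw [h.1, h.2.1]⟩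

lemma NS.nestingDisjunction_of_rule {C : NSCtx} {s : NS} {ps : List NS}
    (hs : ∀ Λ, s ≠ .node 0 0 Λ)
    (rule : ∀ C : NSCtx, (∀ p ∈ ps, (C.fill p).Derivable) → (C.fill s).Derivable)
    (ih : ∀ p ∈ ps, (C.fill p).NestingDisjunction) :
    (C.fill s).NestingDisjunction := by
  intro L hL
  obtain ⟨L₁, C', L₂, rfl⟩ := NSCtx.eq_child_of_fill_eq_node hL hs
  simp only [NSCtx.fill, NS.node.injEq, true_and] at hL
  subst hL
  by_cases hside : ∃ G ∈ L₁ ++ L₂, (NS.node 0 0 [G]).Derivable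
  · obtain ⟨G, hG, hGd⟩ := hside
    exact ⟨G, by simp only [List.mem_append, List.mem_cons] at hG ⊢; tauto, hGd⟩
  · refine ⟨C'.fill s, by simp, rule (.child 0 0 [] C' []) fun p hp => ?_⟩
    obtain ⟨G, hG, hGd⟩ := ih p hp _ rfl
    simp only [List.mem_append, List.mem_cons] at hG
    rcases hG with hG | rfl | hG
    · exact absurd ⟨G, List.mem_append_left _ hG, hGd⟩ hside
    · exact hGd
    · exact absurd ⟨G, List.mem_append_right _ hG, hGd⟩ hside

theorem NSDeriv.nestingDisjunction {n : ℕ} {S : NS} (h : NSDeriv n S) : S.NestingDisjunction := by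
  induction h with
  | init C Γ Δ Λ p =>
    exact NS.nestingDisjunction_of_rule (ps := []) (by simp)
      (fun C _ => ⟨0, .init C Γ Δ Λ p⟩) (by simp)
  | botL C Γ Δ Λ =>
    exact NS.nestingDisjunction_of_rule (ps := []) (by simp)
      (fun C _ => ⟨0, .botL C Γ Δ Λ⟩) (by simp)
  | andL C Γ Δ Λ A B _ ih =>
    refine NS.nestingDisjunction_of_rule (by simp) (fun C h => ?_)
      (List.forall_mem_singleton.2 ih)
    obtain ⟨n, hn⟩ := List.forall_mem_singleton.1 h
    exact ⟨_, .andL C Γ Δ Λ A B hn⟩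
  | andR C Γ Δ Λ A B _ _ ih₁ ih₂ =>
    refine NS.nestingDisjunction_of_rule (by simp) (fun C h => ?_)
      (List.forall_mem_cons.2 ⟨ih₁, List.forall_mem_singleton.2 ih₂⟩)
    obtain ⟨⟨n, hn⟩, h₂⟩ := List.forall_mem_cons.1 h
    obtain ⟨m, hm⟩ := List.forall_mem_singleton.1 h₂
    exact ⟨_, .andR C Γ Δ Λ A B hn hm⟩
  | orL C Γ Δ Λ A B _ _ ih₁ ih₂ =>
    refine NS.nestingDisjunction_of_rule (by simp) (fun C h => ?_)
      (List.forall_mem_cons.2 ⟨ih₁, List.forall_mem_singleton.2 ih₂⟩)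
    obtain ⟨⟨n, hn⟩, h₂⟩ := List.forall_mem_cons.1 h
    obtain ⟨m, hm⟩ := List.forall_mem_singleton.1 h₂
    exact ⟨_, .orL C Γ Δ Λ A B hn hm⟩
  | orR C Γ Δ Λ A B _ ih =>
    refine NS.nestingDisjunction_of_rule (by simp) (fun C h => ?_)
      (List.forall_mem_singleton.2 ih)
    obtain ⟨n, hn⟩ := List.forall_mem_singleton.1 h
    exact ⟨_, .orR C Γ Δ Λ A B hn⟩
  | impL C Γ Δ Λ A B _ _ ih₁ ih₂ =>
    refine NS.nestingDisjunction_of_rule (by simp) (fun C h => ?_)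
      (List.forall_mem_cons.2 ⟨ih₁, List.forall_mem_singleton.2 ih₂⟩)
    obtain ⟨⟨n, hn⟩, h₂⟩ := List.forall_mem_cons.1 h
    obtain ⟨m, hm⟩ := List.forall_mem_singleton.1 h₂
    exact ⟨_, .impL C Γ Δ Λ A B hn hm⟩
  | impR C Γ Δ Λ A B _ ih =>
    refine NS.nestingDisjunction_of_rule (by simp) (fun C h => ?_)
      (List.forall_mem_singleton.2 ih)
    obtain ⟨n, hn⟩ := List.forall_mem_singleton.1 h
    exact ⟨_, .impR C Γ Δ Λ A B hn⟩
  | lift C Γ Δ Γ' Δ' Λ₁ Λ₂ Λ' A _ ih =>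
    refine NS.nestingDisjunction_of_rule (by simp) (fun C h => ?_)
      (List.forall_mem_singleton.2 ih)
    obtain ⟨n, hn⟩ := List.forall_mem_singleton.1 h
    exact ⟨_, .lift C Γ Δ Γ' Δ' Λ₁ Λ₂ Λ' A hn⟩

/-- If the nested sequent `∅ ⊢ ∅, [Υ₁], …, [Υₙ]` is derivable in `NS_mLJ`,
then `∅ ⊢ ∅, [Υᵢ]` is derivable in `NS_mLJ` for some `i ∈ {1,…,n}`. -/
theorem NSmLJ_nesting_disjunction :
    ∀ (L : List NS), (∃ n, NSDeriv n (.node 0 0 L)) →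
      ∃ G ∈ L, ∃ n, NSDeriv n (.node 0 0 [G]) := by
  rintro L ⟨n, h⟩
  exact h.nestingDisjunction L rfl
end

section
/- The linear nested system LNS_mLJ and the sequent calculus mLJ are equivalent: a sequent Γ⊢Δ is derivable in mLJ if and only if the one-component linear nested sequent Γ⊢Δ is derivable in LNS_mLJ. -/
/-- The multi-succedent intuitionistic sequent calculus `mLJ`. -/
inductive MLJ : Multiset IForm → Multiset IForm → Prop
  | init (Γ Δ : Multiset IForm) (p : ℕ) :
      MLJ (IForm.atom p ::ₘ Γ) (IForm.atom p ::ₘ Δ)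
  | botL (Γ Δ : Multiset IForm) : MLJ (IForm.bot ::ₘ Γ) Δ
  | andL {Γ Δ : Multiset IForm} {A B : IForm} :
      MLJ (A ::ₘ B ::ₘ Γ) Δ → MLJ (A.and B ::ₘ Γ) Δ
  | andR {Γ Δ : Multiset IForm} {A B : IForm} :
      MLJ Γ (A ::ₘ Δ) → MLJ Γ (B ::ₘ Δ) → MLJ Γ (A.and B ::ₘ Δ)
  | orL {Γ Δ : Multiset IForm} {A B : IForm} :
      MLJ (A ::ₘ Γ) Δ → MLJ (B ::ₘ Γ) Δ → MLJ (A.or B ::ₘ Γ) Δ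
  | orR {Γ Δ : Multiset IForm} {A B : IForm} :
      MLJ Γ (A ::ₘ B ::ₘ Δ) → MLJ Γ (A.or B ::ₘ Δ)
  | impL {Γ Δ : Multiset IForm} {A B : IForm} :
      MLJ (A.imp B ::ₘ Γ) (A ::ₘ Δ) → MLJ (B ::ₘ Γ) Δ → MLJ (A.imp B ::ₘ Γ) Δ
  | impR {Γ Δ : Multiset IForm} {A B : IForm} :
      MLJ (A ::ₘ Γ) {B} → MLJ Γ (A.imp B ::ₘ Δ)

/-- A sequent: a pair of finite multisets of formulas. -/
abbrev ISeq := Multiset IForm × Multiset IForm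

/-- Derivability in the linear nested system `LNS_mLJ`.  A linear nested
sequent `G ∥ Γ ⊢ Δ` is represented by the list `G` of its non-final
components together with its last component `Γ ⊢ Δ`.  All rules act on the
last component (and, for `⊃_R` and `lift`, on the two last components). -/
inductive LNS : List ISeq → Multiset IForm → Multiset IForm → Prop
  | init (G : List ISeq) (Γ Δ : Multiset IForm) (A : IForm) :
      LNS G (A ::ₘ Γ) (A ::ₘ Δ)
  | botL (G : List ISeq) (Γ Δ : Multiset IForm) : LNS G (IForm.bot ::ₘ Γ) Δ
  | andL {G : List ISeq} {Γ Δ : Multiset IForm} {A B : IForm} :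
      LNS G (A ::ₘ B ::ₘ Γ) Δ → LNS G (A.and B ::ₘ Γ) Δ
  | andR {G : List ISeq} {Γ Δ : Multiset IForm} {A B : IForm} :
      LNS G Γ (A ::ₘ Δ) → LNS G Γ (B ::ₘ Δ) → LNS G Γ (A.and B ::ₘ Δ)
  | orL {G : List ISeq} {Γ Δ : Multiset IForm} {A B : IForm} :
      LNS G (A ::ₘ Γ) Δ → LNS G (B ::ₘ Γ) Δ → LNS G (A.or B ::ₘ Γ) Δ
  | orR {G : List ISeq} {Γ Δ : Multiset IForm} {A B : IForm} :
      LNS G Γ (A ::ₘ B ::ₘ Δ) → LNS G Γ (A.or B ::ₘ Δ)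
  | impL {G : List ISeq} {Γ Δ : Multiset IForm} {A B : IForm} :
      LNS G (A.imp B ::ₘ Γ) (A ::ₘ Δ) → LNS G (B ::ₘ Γ) Δ →
      LNS G (A.imp B ::ₘ Γ) Δ
  | impR {G : List ISeq} {Γ Δ : Multiset IForm} {A B : IForm} :
      LNS (G ++ [(Γ, Δ)]) {A} {B} → LNS G Γ (A.imp B ::ₘ Δ)
  | lift {G : List ISeq} {Γ Δ Γ' Δ' : Multiset IForm} {A : IForm} :
      LNS (G ++ [(Γ, Δ)]) (A ::ₘ Γ') Δ' → LNS (G ++ [(A ::ₘ Γ, Δ)]) Γ' Δ'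

/-!
Both directions are inductions on derivations. An `LNS_mLJ` derivation of `G ∥ Γ ⊢ Δ` flattens to
an `mLJ` derivation of `Γ, Γ₁, …, Γₙ ⊢ Δ`, where the `Γᵢ` are the antecedents of the components of
`G`: the succedents of earlier components are dropped, exactly as `⊃_R` of `mLJ` drops `Δ`, and
`lift` just moves a formula inside the flattened antecedent. Since `init` of `LNS_mLJ` is not
restricted to atoms, this needs `mLJ`'s `init` to be admissible on arbitrary formulas.
Conversely, `mLJ`'s `⊃_R` is simulated by `⊃_R` of `LNS_mLJ` followed by lifting all of `Γ` into
the new component, so the simulation has to be proved under every history `G`.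
-/

theorem MLJ.identity (A : IForm) : ∀ Γ Δ : Multiset IForm, MLJ (A ::ₘ Γ) (A ::ₘ Δ) := by
  induction A with
  | atom p => exact fun Γ Δ ↦ MLJ.init Γ Δ p
  | bot => exact fun Γ Δ ↦ MLJ.botL Γ _
  | and A B ihA ihB =>
    intro Γ Δ
    refine MLJ.andR (MLJ.andL (ihA _ _)) (MLJ.andL ?_)
    rw [Multiset.cons_swap]
    exact ihB _ _
  | or A B ihA ihB =>
    intro Γ Δ
    refine MLJ.orL (MLJ.orR (ihA _ _)) (MLJ.orR ?_)
    rw [Multiset.cons_swap]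
    exact ihB _ _
  | imp A B ihA ihB =>
    intro Γ Δ
    refine MLJ.impR ?_
    rw [Multiset.cons_swap]
    refine MLJ.impL ?_ (ihB _ _)
    rw [Multiset.cons_swap]
    exact ihA _ _

def antecedents (G : List ISeq) : Multiset IForm := (G.map Prod.fst).sum

@[simp]
theorem antecedents_nil : antecedents [] = 0 := rfl

@[simp]
theorem antecedents_append_singleton (G : List ISeq) (Γ Δ : Multiset IForm) :
    antecedents (G ++ [(Γ, Δ)]) = antecedents G + Γ := by
  simp [antecedents]

theorem MLJ.of_LNS {G : List ISeq} {Γ Δ : Multiset IForm} (h : LNS G Γ Δ) :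
    MLJ (Γ + antecedents G) Δ := by
  induction h with
  | init _ _ _ A => rw [Multiset.cons_add]; exact MLJ.identity A _ _
  | botL => rw [Multiset.cons_add]; exact MLJ.botL _ _
  | andL _ ih => simp only [Multiset.cons_add] at ih ⊢; exact MLJ.andL ih
  | andR _ _ ih₁ ih₂ => exact MLJ.andR ih₁ ih₂
  | orL _ _ ih₁ ih₂ => simp only [Multiset.cons_add] at ih₁ ih₂ ⊢; exact MLJ.orL ih₁ ih₂
  | orR _ ih => exact MLJ.orR ih
  | impL _ _ ih₁ ih₂ => simp only [Multiset.cons_add] at ih₁ ih₂ ⊢; exact MLJ.impL ih₁ ih₂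
  | impR _ ih =>
    refine MLJ.impR ?_
    rwa [antecedents_append_singleton, Multiset.singleton_add, add_comm] at ih
  | lift _ ih =>
    simpa only [antecedents_append_singleton, Multiset.cons_add, Multiset.add_cons] using ih

theorem LNS.lift_multiset {G : List ISeq} {Δ Δ' : Multiset IForm} (Θ : Multiset IForm) :
    ∀ {Γ Γ' : Multiset IForm}, LNS (G ++ [(Γ, Δ)]) (Θ + Γ') Δ' → LNS (G ++ [(Θ + Γ, Δ)]) Γ' Δ' := by
  induction Θ using Multiset.induction with
  | empty => simp
  | cons A Θ ih =>
    intro Γ Γ' h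
    rw [Multiset.cons_add, ← Multiset.add_cons] at h
    rw [Multiset.cons_add]
    exact LNS.lift (ih h)

theorem LNS.of_MLJ {Γ Δ : Multiset IForm} (h : MLJ Γ Δ) (G : List ISeq) : LNS G Γ Δ := by
  induction h generalizing G with
  | init => exact LNS.init _ _ _ _
  | botL => exact LNS.botL _ _ _
  | andL _ ih => exact LNS.andL (ih G)
  | andR _ _ ih₁ ih₂ => exact LNS.andR (ih₁ G) (ih₂ G)
  | orL _ _ ih₁ ih₂ => exact LNS.orL (ih₁ G) (ih₂ G)
  | orR _ ih => exact LNS.orR (ih G)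
  | impL _ _ ih₁ ih₂ => exact LNS.impL (ih₁ G) (ih₂ G)
  | @impR Γ Δ A B _ ih =>
    refine LNS.impR ?_
    have h : LNS (G ++ [(0, Δ)]) (Γ + {A}) {B} := by
      rw [add_comm, Multiset.singleton_add]
      exact ih _
    simpa only [add_zero] using LNS.lift_multiset Γ h

/-- `LNS_mLJ` and `mLJ` are equivalent: a sequent `Γ ⊢ Δ` is derivable in
`mLJ` iff the one-component linear nested sequent `Γ ⊢ Δ` is derivable in
`LNS_mLJ`. -/
theorem LNSmLJ_equiv_mLJ :
    ∀ (Γ Δ : Multiset IForm), MLJ Γ Δ ↔ LNS [] Γ Δ := by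
  intro Γ Δ
  refine ⟨fun h ↦ LNS.of_MLJ h [], fun h ↦ ?_⟩
  simpa using MLJ.of_LNS h
end

section
/- The rule lift' is admissible in the labelled calculus G3I: if the sequent R,x≤y,X,y:A⊢Y is derivable in G3I, then the sequent R,x≤y,X,x:A⊢Y is derivable in G3I. -/
/-- Relation sets: multisets of relation terms over state variables. -/
abbrev LRel := Multiset (ℕ × ℕ)

/-- Multisets of labelled formulas `x : A`. -/
abbrev LCtx := Multiset (ℕ × IForm)

/-- The state variables occurring in a relation set. -/
def relVars (R : LRel) : Multiset ℕ := R.map Prod.fst + R.map Prod.snd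

/-- The state variables occurring in a multiset of labelled formulas. -/
def labVars (X : LCtx) : Multiset ℕ := X.map Prod.fst

/-- `y` is fresh for the labelled sequent `R, X ⊢ Y`. -/
def FreshFor (y : ℕ) (R : LRel) (X Y : LCtx) : Prop :=
  y ∉ relVars R ∧ y ∉ labVars X ∧ y ∉ labVars Y

/-- Derivability in the labelled sequent calculus `G3I`; a relation term
`(x, y)` is read as `x ≤ y`. -/
inductive G3I : LRel → LCtx → LCtx → Prop
  | init (R : LRel) (X Y : LCtx) (x y p : ℕ) :
      G3I ((x, y) ::ₘ R) ((x, IForm.atom p) ::ₘ X) ((y, IForm.atom p) ::ₘ Y)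
  | botL (R : LRel) (X Y : LCtx) (x : ℕ) : G3I R ((x, IForm.bot) ::ₘ X) Y
  | andL {R : LRel} {X Y : LCtx} {x : ℕ} {A B : IForm} :
      G3I R ((x, A) ::ₘ (x, B) ::ₘ X) Y → G3I R ((x, A.and B) ::ₘ X) Y
  | andR {R : LRel} {X Y : LCtx} {x : ℕ} {A B : IForm} :
      G3I R X ((x, A) ::ₘ Y) → G3I R X ((x, B) ::ₘ Y) →
      G3I R X ((x, A.and B) ::ₘ Y)
  | orL {R : LRel} {X Y : LCtx} {x : ℕ} {A B : IForm} :
      G3I R ((x, A) ::ₘ X) Y → G3I R ((x, B) ::ₘ X) Y →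
      G3I R ((x, A.or B) ::ₘ X) Y
  | orR {R : LRel} {X Y : LCtx} {x : ℕ} {A B : IForm} :
      G3I R X ((x, A) ::ₘ (x, B) ::ₘ Y) → G3I R X ((x, A.or B) ::ₘ Y)
  | impL {R : LRel} {X Y : LCtx} {x y : ℕ} {A B : IForm} :
      G3I ((x, y) ::ₘ R) ((x, A.imp B) ::ₘ X) ((y, A) ::ₘ Y) →
      G3I ((x, y) ::ₘ R) ((y, B) ::ₘ X) Y →
      G3I ((x, y) ::ₘ R) ((x, A.imp B) ::ₘ X) Y
  | impR {R : LRel} {X Y : LCtx} {x : ℕ} {A B : IForm} (y : ℕ) :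
      y ≠ x → FreshFor y R X Y →
      G3I ((x, y) ::ₘ R) ((y, A) ::ₘ X) ((y, B) ::ₘ Y) →
      G3I R X ((x, IForm.imp A B) ::ₘ Y)
  | ref {R : LRel} {X Y : LCtx} (x : ℕ) :
      G3I ((x, x) ::ₘ R) X Y → G3I R X Y
  | trans {R : LRel} {X Y : LCtx} {x y z : ℕ} :
      G3I ((x, z) ::ₘ (x, y) ::ₘ (y, z) ::ₘ R) X Y →
      G3I ((x, y) ::ₘ (y, z) ::ₘ R) X Y

/-!
Induct on the derivation, lifting a whole multiset of `y`-labelled formulas to `x` at once,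
since `∧L` turns one lifted formula into two. The only delicate rules are those that consult
the relation part at the lifted label: an initial sequent or `⊃L` at `y` uses some `y ≤ v`,
whereas after lifting it needs `x ≤ v`, which `Trans` supplies from `x ≤ y, y ≤ v`. The premises
of `⊃L` are derived without `x ≤ v` and are weakened by it; weakening by a relation term over
variables already present cannot clash with the eigenvariables of `⊃R`.
-/

theorem relVars_add (R S : LRel) : relVars (R + S) = relVars R + relVars S := by
  simp only [relVars, Multiset.map_add]
  abel

theorem relVars_cons (a b : ℕ) (R : LRel) : relVars ((a, b) ::ₘ R) = a ::ₘ b ::ₘ relVars R := by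
  simp only [relVars, Multiset.map_cons, Multiset.cons_add, Multiset.add_cons]
  exact Multiset.cons_swap _ _ _

theorem relVars_subset_cons (p : ℕ × ℕ) (R : LRel) : relVars R ⊆ relVars (p ::ₘ R) := by
  rw [relVars_cons]
  exact Multiset.Subset.trans (Multiset.subset_cons _ _) (Multiset.subset_cons _ _)

theorem fst_mem_relVars {a b : ℕ} {R : LRel} (h : (a, b) ∈ R) : a ∈ relVars R :=
  Multiset.mem_add.2 (Or.inl (Multiset.mem_map_of_mem _ h))

theorem snd_mem_relVars {a b : ℕ} {R : LRel} (h : (a, b) ∈ R) : b ∈ relVars R :=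
  Multiset.mem_add.2 (Or.inr (Multiset.mem_map_of_mem _ h))

theorem relVars_singleton_subset {a b : ℕ} {R : LRel} (ha : a ∈ relVars R)
    (hb : b ∈ relVars R) : relVars {(a, b)} ⊆ relVars R := by
  intro c hc
  simp only [relVars, Multiset.map_singleton, Multiset.singleton_add, Multiset.mem_cons,
    Multiset.mem_singleton] at hc
  rcases hc with rfl | rfl
  exacts [ha, hb]

theorem labVars_add (X Y : LCtx) : labVars (X + Y) = labVars X + labVars Y :=
  Multiset.map_add _ _ _

def atLabel (y : ℕ) (Z : Multiset IForm) : LCtx := Z.map ((y, ·))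

theorem atLabel_cons (y : ℕ) (A : IForm) (Z : Multiset IForm) :
    atLabel y (A ::ₘ Z) = (y, A) ::ₘ atLabel y Z :=
  Multiset.map_cons _ _ _

theorem eq_of_mem_labVars_atLabel {w x : ℕ} {Z : Multiset IForm}
    (h : w ∈ labVars (atLabel x Z)) : w = x := by
  simp only [labVars, atLabel, Multiset.map_map, Multiset.mem_map] at h
  obtain ⟨_, _, rfl⟩ := h
  rfl

theorem cons_eq_atLabel_add {y z : ℕ} {C : IForm} {X X₀ : LCtx} {Z : Multiset IForm}
    (h : (z, C) ::ₘ X = atLabel y Z + X₀) :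
    (∃ X₀', X₀ = (z, C) ::ₘ X₀' ∧ X = atLabel y Z + X₀') ∨
      (∃ Z', Z = C ::ₘ Z' ∧ y = z ∧ X = atLabel y Z' + X₀) := by
  have hmem : (z, C) ∈ atLabel y Z + X₀ := h ▸ Multiset.mem_cons_self _ _
  rcases Multiset.mem_add.1 hmem with hZ | hX₀
  · obtain ⟨C', hC', hzC⟩ := Multiset.mem_map.1 hZ
    cases hzC
    obtain ⟨Z', rfl⟩ := Multiset.exists_cons_of_mem hC'
    rw [atLabel_cons, Multiset.cons_add, Multiset.cons_inj_right] at h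
    exact Or.inr ⟨Z', rfl, rfl, h⟩
  · obtain ⟨X₀', rfl⟩ := Multiset.exists_cons_of_mem hX₀
    rw [Multiset.add_cons, Multiset.cons_inj_right] at h
    exact Or.inl ⟨X₀', rfl, h⟩

namespace G3I

theorem weaken_rel {R R' : LRel} {X Y : LCtx} (D : G3I R X Y)
    (hR' : relVars R' ⊆ relVars R) : G3I (R' + R) X Y := by
  induction D with
  | init => rw [Multiset.add_cons]; exact init _ _ _ _ _ _
  | botL => exact botL _ _ _ _
  | andL _ ih => exact andL (ih hR')
  | andR _ _ ih₁ ih₂ => exact andR (ih₁ hR') (ih₂ hR')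
  | orL _ _ ih₁ ih₂ => exact orL (ih₁ hR') (ih₂ hR')
  | orR _ ih => exact orR (ih hR')
  | impL _ _ ih₁ ih₂ =>
    rw [Multiset.add_cons] at ih₁ ih₂ ⊢
    exact impL (ih₁ hR') (ih₂ hR')
  | @impR R _ _ _ _ _ w hw hfresh _ ih =>
    have hwR : w ∉ relVars (R' + R) := by
      rw [relVars_add, Multiset.mem_add]
      exact fun h => h.elim (fun h => hfresh.1 (hR' h)) hfresh.1
    refine impR w hw ⟨hwR, hfresh.2⟩ ?_
    simpa only [Multiset.add_cons] using
      ih (Multiset.Subset.trans hR' (relVars_subset_cons _ _))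
  | ref x _ ih =>
    refine ref x ?_
    simpa only [Multiset.add_cons] using
      ih (Multiset.Subset.trans hR' (relVars_subset_cons _ _))
  | trans _ ih =>
    simp only [Multiset.add_cons] at ih ⊢
    exact trans (ih (Multiset.Subset.trans hR' (relVars_subset_cons _ _)))

theorem trans_of_mem {R : LRel} {X Y : LCtx} {x y z : ℕ} (hxy : (x, y) ∈ R) (hyz : (y, z) ∈ R)
    (hne : x ≠ y) (D : G3I ((x, z) ::ₘ R) X Y) : G3I R X Y := by
  obtain ⟨R₁, rfl⟩ := Multiset.exists_cons_of_mem hxy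
  have hyz : (y, z) ∈ R₁ :=
    (Multiset.mem_cons.1 hyz).resolve_left fun h => hne (congrArg Prod.fst h).symm
  obtain ⟨R₂, rfl⟩ := Multiset.exists_cons_of_mem hyz
  exact trans D

theorem init_trans {R : LRel} {X Y : LCtx} {x y z p : ℕ} (hxy : (x, y) ∈ R)
    (hyz : (y, z) ∈ R) (hne : x ≠ y) :
    G3I R ((x, IForm.atom p) ::ₘ X) ((z, IForm.atom p) ::ₘ Y) :=
  trans_of_mem hxy hyz hne (init _ _ _ _ _ _)

theorem impL_trans {R : LRel} {X Y : LCtx} {x y z : ℕ} {A B : IForm} (hxy : (x, y) ∈ R)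
    (hyz : (y, z) ∈ R) (hne : x ≠ y) (D₁ : G3I R ((x, A.imp B) ::ₘ X) ((z, A) ::ₘ Y))
    (D₂ : G3I R ((z, B) ::ₘ X) Y) : G3I R ((x, A.imp B) ::ₘ X) Y := by
  have hxz : relVars {(x, z)} ⊆ relVars R :=
    relVars_singleton_subset (fst_mem_relVars hxy) (snd_mem_relVars hyz)
  have D₁' := D₁.weaken_rel hxz
  have D₂' := D₂.weaken_rel hxz
  rw [Multiset.singleton_add] at D₁' D₂'
  exact trans_of_mem hxy hyz hne (impL D₁' D₂')

theorem lift_atLabel {x y : ℕ} (hxy : x ≠ y) {R : LRel} {X Y : LCtx} (Z : Multiset IForm)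
    (X₀ : LCtx) (hR : (x, y) ∈ R) (hX : X = atLabel y Z + X₀) (D : G3I R X Y) :
    G3I R (atLabel x Z + X₀) Y := by
  induction D generalizing Z X₀ with
  | init =>
    rcases cons_eq_atLabel_add hX with ⟨X₀, rfl, -⟩ | ⟨Z, rfl, rfl, -⟩
    · rw [Multiset.add_cons]; exact init _ _ _ _ _ _
    · rw [atLabel_cons, Multiset.cons_add]
      exact init_trans hR (Multiset.mem_cons_self _ _) hxy
  | botL =>
    rcases cons_eq_atLabel_add hX with ⟨X₀, rfl, -⟩ | ⟨Z, rfl, rfl, -⟩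
    · rw [Multiset.add_cons]; exact botL _ _ _ _
    · rw [atLabel_cons, Multiset.cons_add]; exact botL _ _ _ _
  | @andL _ _ _ u A B _ ih =>
    rcases cons_eq_atLabel_add hX with ⟨X₀, rfl, rfl⟩ | ⟨Z, rfl, rfl, rfl⟩
    · have := ih Z ((u, A) ::ₘ (u, B) ::ₘ X₀) hR (by simp only [Multiset.add_cons])
      rw [Multiset.add_cons]
      exact andL (by simpa only [Multiset.add_cons] using this)
    · have := ih (A ::ₘ B ::ₘ Z) X₀ hR (by simp only [atLabel_cons, Multiset.cons_add])
      rw [atLabel_cons, Multiset.cons_add]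
      exact andL (by simpa only [atLabel_cons, Multiset.cons_add] using this)
  | andR _ _ ih₁ ih₂ => exact andR (ih₁ Z X₀ hR hX) (ih₂ Z X₀ hR hX)
  | @orL _ _ _ u A B _ _ ih₁ ih₂ =>
    rcases cons_eq_atLabel_add hX with ⟨X₀, rfl, rfl⟩ | ⟨Z, rfl, rfl, rfl⟩
    · have h₁ := ih₁ Z ((u, A) ::ₘ X₀) hR (by simp only [Multiset.add_cons])
      have h₂ := ih₂ Z ((u, B) ::ₘ X₀) hR (by simp only [Multiset.add_cons])
      rw [Multiset.add_cons]
      exact orL (by simpa only [Multiset.add_cons] using h₁)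
        (by simpa only [Multiset.add_cons] using h₂)
    · have h₁ := ih₁ (A ::ₘ Z) X₀ hR (by simp only [atLabel_cons, Multiset.cons_add])
      have h₂ := ih₂ (B ::ₘ Z) X₀ hR (by simp only [atLabel_cons, Multiset.cons_add])
      rw [atLabel_cons, Multiset.cons_add]
      exact orL (by simpa only [atLabel_cons, Multiset.cons_add] using h₁)
        (by simpa only [atLabel_cons, Multiset.cons_add] using h₂)
  | orR _ ih => exact orR (ih Z X₀ hR hX)
  | @impL R _ _ u v A B _ _ ih₁ ih₂ =>
    rcases cons_eq_atLabel_add hX with ⟨X₀, rfl, rfl⟩ | ⟨Z, rfl, rfl, rfl⟩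
    · have h₁ := ih₁ Z ((u, A.imp B) ::ₘ X₀) hR (by simp only [Multiset.add_cons])
      have h₂ := ih₂ Z ((v, B) ::ₘ X₀) hR (by simp only [Multiset.add_cons])
      rw [Multiset.add_cons]
      exact impL (by simpa only [Multiset.add_cons] using h₁)
        (by simpa only [Multiset.add_cons] using h₂)
    · have h₁ := ih₁ (A.imp B ::ₘ Z) X₀ hR (by simp only [atLabel_cons, Multiset.cons_add])
      have h₂ := ih₂ Z ((v, B) ::ₘ X₀) hR (by simp only [Multiset.add_cons])
      rw [atLabel_cons, Multiset.cons_add]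
      exact impL_trans hR (Multiset.mem_cons_self _ _) hxy
        (by simpa only [atLabel_cons, Multiset.cons_add] using h₁)
        (by simpa only [Multiset.add_cons] using h₂)
  | @impR _ _ _ _ A _ w hw hfresh _ ih =>
    subst hX
    have hwx : w ≠ x := fun h => hfresh.1 (h ▸ fst_mem_relVars hR)
    have hwX : w ∉ labVars (atLabel x Z + X₀) := by
      have := hfresh.2.1
      rw [labVars_add, Multiset.mem_add] at this ⊢
      exact fun h => h.elim (fun h => hwx (eq_of_mem_labVars_atLabel h))
        fun h => this (Or.inr h)
    have h := ih Z ((w, A) ::ₘ X₀) (Multiset.mem_cons_of_mem hR)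
      (by simp only [Multiset.add_cons])
    exact impR w hw ⟨hfresh.1, hwX, hfresh.2.2⟩ (by simpa only [Multiset.add_cons] using h)
  | ref u _ ih => exact ref u (ih Z X₀ (Multiset.mem_cons_of_mem hR) hX)
  | trans _ ih => exact trans (ih Z X₀ (Multiset.mem_cons_of_mem hR) hX)

end G3I

/-- The rule `lift'` is admissible in `G3I`: if `R, x≤y, X, y:A ⊢ Y` is
derivable in `G3I`, then `R, x≤y, X, x:A ⊢ Y` is derivable in `G3I`. -/
theorem G3I_lift'_admissible :
    ∀ (R : LRel) (X Y : LCtx) (x y : ℕ) (A : IForm),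
      G3I ((x, y) ::ₘ R) ((y, A) ::ₘ X) Y →
      G3I ((x, y) ::ₘ R) ((x, A) ::ₘ X) Y := by
  intro R X Y x y A D
  rcases eq_or_ne x y with rfl | hxy
  · exact D
  · simpa [atLabel] using
      D.lift_atLabel hxy {A} X (Multiset.mem_cons_self _ _) (by simp [atLabel])
end

section
/- For all i,j∈N with j⪯i and 4∈F(i), the rule TL(4_{ij}) is derivable in G3mm: if the sequent R,xR_jy,X,x:□_iA,y:□_iA⊢Y is derivable in G3mm, then the sequent R,xR_jy,X,x:□_iA⊢Y is derivable in G3mm. -/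
/-- The modal axioms D, T and 4. -/
inductive MAx : Type
  | d | t | four
  deriving DecidableEq

/-- A description `(N, ⪯, F)` of a simply dependent multimodal logic:
`N` is a finite set of natural numbers, `⪯` (written `le`) is a partial order
on `N`, and `F` maps each index to a subset of `{D, T, 4}`; the description is
transitive-closed. -/
structure SDM where
  N : Finset ℕ
  le : ℕ → ℕ → Prop
  F : ℕ → Finset MAx
  le_refl : ∀ i ∈ N, le i i
  le_trans : ∀ i ∈ N, ∀ j ∈ N, ∀ k ∈ N, le i j → le j k → le i k
  le_antisymm : ∀ i ∈ N, ∀ j ∈ N, le i j → le j i → i = j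
  transClosed : ∀ i ∈ N, ∀ j ∈ N, le j i → MAx.four ∈ F j → MAx.four ∈ F i

/-- Classical propositional formulas extended with modalities `□_i`. -/
inductive MForm : Type
  | atom : ℕ → MForm
  | bot  : MForm
  | and  : MForm → MForm → MForm
  | or   : MForm → MForm → MForm
  | imp  : MForm → MForm → MForm
  | box  : ℕ → MForm → MForm

/-- Indexed relation sets: multisets of indexed relation terms `x R_i y`,
represented as triples `(i, x, y)`. -/
abbrev MRel := Multiset (ℕ × ℕ × ℕ)

/-- Multisets of labelled modal formulas `x : A`. -/
abbrev MCtx := Multiset (ℕ × MForm)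

/-- The state variables occurring in an indexed relation set. -/
def mrelVars (R : MRel) : Multiset ℕ := R.map (fun p => p.2.1) + R.map (fun p => p.2.2)

/-- The state variables occurring in a multiset of labelled formulas. -/
def mlabVars (X : MCtx) : Multiset ℕ := X.map Prod.fst

/-- `y` is fresh for the labelled sequent `R, X ⊢ Y`. -/
def MFreshFor (y : ℕ) (R : MRel) (X Y : MCtx) : Prop :=
  y ∉ mrelVars R ∧ y ∉ mlabVars X ∧ y ∉ mlabVars Y

/-- Derivability in the labelled sequent calculus `G3mm`. -/
inductive G3mm (D : SDM) : MRel → MCtx → MCtx → Prop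
  | init (R : MRel) (X Y : MCtx) (x p : ℕ) :
      G3mm D R ((x, MForm.atom p) ::ₘ X) ((x, MForm.atom p) ::ₘ Y)
  | botL (R : MRel) (X Y : MCtx) (x : ℕ) : G3mm D R ((x, MForm.bot) ::ₘ X) Y
  | andL {R : MRel} {X Y : MCtx} {x : ℕ} {A B : MForm} :
      G3mm D R ((x, A) ::ₘ (x, B) ::ₘ X) Y → G3mm D R ((x, A.and B) ::ₘ X) Y
  | andR {R : MRel} {X Y : MCtx} {x : ℕ} {A B : MForm} :
      G3mm D R X ((x, A) ::ₘ Y) → G3mm D R X ((x, B) ::ₘ Y) →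
      G3mm D R X ((x, A.and B) ::ₘ Y)
  | orL {R : MRel} {X Y : MCtx} {x : ℕ} {A B : MForm} :
      G3mm D R ((x, A) ::ₘ X) Y → G3mm D R ((x, B) ::ₘ X) Y →
      G3mm D R ((x, A.or B) ::ₘ X) Y
  | orR {R : MRel} {X Y : MCtx} {x : ℕ} {A B : MForm} :
      G3mm D R X ((x, A) ::ₘ (x, B) ::ₘ Y) → G3mm D R X ((x, A.or B) ::ₘ Y)
  | impL {R : MRel} {X Y : MCtx} {x : ℕ} {A B : MForm} :
      G3mm D R X ((x, A) ::ₘ Y) → G3mm D R ((x, B) ::ₘ X) Y →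
      G3mm D R ((x, A.imp B) ::ₘ X) Y
  | impR {R : MRel} {X Y : MCtx} {x : ℕ} {A B : MForm} :
      G3mm D R ((x, A) ::ₘ X) ((x, B) ::ₘ Y) → G3mm D R X ((x, A.imp B) ::ₘ Y)
  | boxL {R : MRel} {X Y : MCtx} {x y i : ℕ} {A : MForm} :
      i ∈ D.N →
      G3mm D ((i, x, y) ::ₘ R) ((x, MForm.box i A) ::ₘ (y, A) ::ₘ X) Y →
      G3mm D ((i, x, y) ::ₘ R) ((x, MForm.box i A) ::ₘ X) Y
  | boxR {R : MRel} {X Y : MCtx} {x i : ℕ} {A : MForm} (y : ℕ) :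
      i ∈ D.N → y ≠ x → MFreshFor y R X Y →
      G3mm D ((i, x, y) ::ₘ R) X ((y, A) ::ₘ Y) →
      G3mm D R X ((x, MForm.box i A) ::ₘ Y)
  | refl {R : MRel} {X Y : MCtx} (i x : ℕ) :
      i ∈ D.N → MAx.t ∈ D.F i →
      G3mm D ((i, x, x) ::ₘ R) X Y → G3mm D R X Y
  | trans {R : MRel} {X Y : MCtx} {i x y z : ℕ} :
      i ∈ D.N → MAx.four ∈ D.F i →
      G3mm D ((i, x, z) ::ₘ (i, x, y) ::ₘ (i, y, z) ::ₘ R) X Y →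
      G3mm D ((i, x, y) ::ₘ (i, y, z) ::ₘ R) X Y
  | ser {R : MRel} {X Y : MCtx} (i x : ℕ) (y : ℕ) :
      i ∈ D.N → MAx.d ∈ D.F i → y ≠ x → MFreshFor y R X Y →
      G3mm D ((i, x, y) ::ₘ R) X Y → G3mm D R X Y
  | int {R : MRel} {X Y : MCtx} {i j x y : ℕ} :
      i ∈ D.N → j ∈ D.N → D.le j i →
      G3mm D ((j, x, y) ::ₘ (i, x, y) ::ₘ R) X Y →
      G3mm D ((j, x, y) ::ₘ R) X Y

/-!
By induction on the derivation, `y : □_i A` can be dropped from the antecedent as long as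
`x R_j y` and `x : □_i A` are present. The only interesting step is a `□_iL` inference that uses
`y : □_i A` along some `y R_i z`: there `x : □_i A` does the same job, since Int turns `x R_j y`
into `x R_i y` and Trans (available as `4 ∈ F(i)`) then yields `x R_i z`. The relation terms this
introduces mention only variables of the sequent, so weakening by them respects every
eigenvariable condition.
-/

theorem Multiset.exists_eq_cons_of_cons_eq_cons_of_ne {α : Type*} {a b : α} {s t : Multiset α}
    (h : a ::ₘ s = b ::ₘ t) (hne : a ≠ b) : ∃ u, s = b ::ₘ u ∧ t = a ::ₘ u := by
  rcases Multiset.cons_eq_cons.1 h with ⟨hab, -⟩ | ⟨-, h⟩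
  exacts [absurd hab hne, h]

def seqVars (R : MRel) (X Y : MCtx) : Multiset ℕ := mrelVars R + mlabVars X + mlabVars Y

@[simp]
theorem seqVars_rel_cons (i a b : ℕ) (R : MRel) (X Y : MCtx) :
    seqVars ((i, a, b) ::ₘ R) X Y = a ::ₘ b ::ₘ seqVars R X Y := by
  simp [seqVars, mrelVars, Multiset.cons_add, Multiset.add_cons, Multiset.cons_swap a b]

@[simp]
theorem seqVars_ante_cons (x : ℕ) (A : MForm) (R : MRel) (X Y : MCtx) :
    seqVars R ((x, A) ::ₘ X) Y = x ::ₘ seqVars R X Y := by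
  simp [seqVars, mlabVars, Multiset.add_cons]

@[simp]
theorem seqVars_succ_cons (x : ℕ) (A : MForm) (R : MRel) (X Y : MCtx) :
    seqVars R X ((x, A) ::ₘ Y) = x ::ₘ seqVars R X Y := by
  simp [seqVars, mlabVars, Multiset.add_cons]

theorem mFreshFor_iff {y : ℕ} {R : MRel} {X Y : MCtx} :
    MFreshFor y R X Y ↔ y ∉ seqVars R X Y := by
  simp [MFreshFor, seqVars, or_assoc]

theorem MFreshFor.cons_rel {y k a b : ℕ} {R : MRel} {X Y : MCtx}
    (hy : MFreshFor y R X Y) (ha : y ≠ a) (hb : y ≠ b) :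
    MFreshFor y ((k, a, b) ::ₘ R) X Y := by
  simp_all [mFreshFor_iff]

theorem MFreshFor.of_cons_ante {y x : ℕ} {A : MForm} {R : MRel} {X Y : MCtx}
    (hy : MFreshFor y R ((x, A) ::ₘ X) Y) : MFreshFor y R X Y := by
  simp_all [mFreshFor_iff]

namespace G3mm

variable {D : SDM}

theorem weaken_rel {R : MRel} {X Y : MCtx} (h : G3mm D R X Y) (k : ℕ) {a b : ℕ}
    (ha : a ∈ seqVars R X Y) (hb : b ∈ seqVars R X Y) : G3mm D ((k, a, b) ::ₘ R) X Y := by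
  induction h with
  | init => exact init ..
  | botL => exact botL ..
  | andL _ ih => exact andL (ih (by simp_all) (by simp_all))
  | andR _ _ ih₁ ih₂ =>
    exact andR (ih₁ (by simp_all) (by simp_all)) (ih₂ (by simp_all) (by simp_all))
  | orL _ _ ih₁ ih₂ =>
    exact orL (ih₁ (by simp_all) (by simp_all)) (ih₂ (by simp_all) (by simp_all))
  | orR _ ih => exact orR (ih (by simp_all) (by simp_all))
  | impL _ _ ih₁ ih₂ =>
    exact impL (ih₁ (by simp_all) (by simp_all)) (ih₂ (by simp_all) (by simp_all))
  | impR _ ih => exact impR (ih (by simp_all) (by simp_all))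
  | boxL hi _ ih =>
    rw [Multiset.cons_swap]
    exact boxL hi (Multiset.cons_swap _ _ _ ▸ ih (by simp_all) (by simp_all))
  | @boxR R X Y x i A y hi hne hy _ ih =>
    have hy' : y ∉ seqVars R X ((x, .box i A) ::ₘ Y) := by simp_all [mFreshFor_iff]
    refine boxR y hi hne (hy.cons_rel (ne_of_mem_of_not_mem ha hy').symm
      (ne_of_mem_of_not_mem hb hy').symm) (Multiset.cons_swap _ _ _ ▸ ih ?_ ?_) <;>
    grind [seqVars_rel_cons, seqVars_succ_cons]
  | refl i x hi ht _ ih =>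
    exact refl i x hi ht (Multiset.cons_swap _ _ _ ▸ ih (by simp_all) (by simp_all))
  | @trans R X Y i x y z hi h4 _ ih =>
    have := trans (R := (k, a, b) ::ₘ R) (X := X) (Y := Y) hi h4 <| by
      simpa only [Multiset.cons_swap] using
        ih (by grind [seqVars_rel_cons]) (by grind [seqVars_rel_cons])
    simpa only [Multiset.cons_swap] using this
  | @ser R X Y i x y hi hd hne hy _ ih =>
    have hy' : y ∉ seqVars R X Y := mFreshFor_iff.1 hy
    refine ser i x y hi hd hne (hy.cons_rel (ne_of_mem_of_not_mem ha hy').symm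
      (ne_of_mem_of_not_mem hb hy').symm) (Multiset.cons_swap _ _ _ ▸ ih ?_ ?_) <;>
    grind [seqVars_rel_cons]
  | @int R X Y i j x y hi hj hle _ ih =>
    have := int (R := (k, a, b) ::ₘ R) (X := X) (Y := Y) hi hj hle <| by
      simpa only [Multiset.cons_swap] using
        ih (by grind [seqVars_rel_cons]) (by grind [seqVars_rel_cons])
    simpa only [Multiset.cons_swap] using this

/-- `□_iL` along the composite of `x R_j y` and `y R_i z`, made available by Int and Trans. -/
theorem boxL_of_rel_comp {i j x y z : ℕ} {A : MForm} {R : MRel} {X Y : MCtx}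
    (hi : i ∈ D.N) (hj : j ∈ D.N) (hle : D.le j i) (h4 : MAx.four ∈ D.F i)
    (hxy : (j, x, y) ∈ (i, y, z) ::ₘ R) (hx : (x, .box i A) ∈ X)
    (h : G3mm D ((i, y, z) ::ₘ R) ((z, A) ::ₘ X) Y) : G3mm D ((i, y, z) ::ₘ R) X Y := by
  obtain ⟨X, rfl⟩ := Multiset.exists_cons_of_mem hx
  rcases Multiset.mem_cons.1 hxy with hxy | hxy
  · obtain ⟨rfl, rfl, rfl⟩ : j = i ∧ x = y ∧ y = z := by simpa using hxy
    exact boxL hi (by simpa only [Multiset.cons_swap] using h)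
  obtain ⟨R, rfl⟩ := Multiset.exists_cons_of_mem hxy
  have hxz : G3mm D ((i, x, z) ::ₘ (i, x, y) ::ₘ (i, y, z) ::ₘ (j, x, y) ::ₘ R)
      ((x, .box i A) ::ₘ (z, A) ::ₘ X) Y := by
    have := (h.weaken_rel i (a := x) (b := y) (by simp) (by simp)).weaken_rel i (a := x) (b := z)
      (by simp) (by simp)
    simpa only [Multiset.cons_swap] using this
  have hxy' : G3mm D ((i, x, y) ::ₘ (i, y, z) ::ₘ (j, x, y) ::ₘ R)
      ((x, .box i A) ::ₘ X) Y :=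
    trans hi h4 (boxL hi hxz)
  have := int (R := (i, y, z) ::ₘ R) (x := x) (y := y) (X := (x, .box i A) ::ₘ X) (Y := Y)
    hi hj hle (by simpa only [Multiset.cons_swap] using hxy')
  simpa only [Multiset.cons_swap] using this

theorem of_cons_box_of_rel {i j x y : ℕ} {A : MForm} {R : MRel} {X Y : MCtx}
    (hi : i ∈ D.N) (hj : j ∈ D.N) (hle : D.le j i) (h4 : MAx.four ∈ D.F i)
    (h : G3mm D R ((y, .box i A) ::ₘ X) Y) (hxy : (j, x, y) ∈ R) (hx : (x, .box i A) ∈ X) :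
    G3mm D R X Y := by
  generalize hX' : (y, MForm.box i A) ::ₘ X = X' at h
  induction h generalizing X with
  | init =>
    obtain ⟨u, rfl, rfl⟩ := Multiset.exists_eq_cons_of_cons_eq_cons_of_ne hX'.symm (by simp)
    exact init ..
  | botL =>
    obtain ⟨u, rfl, rfl⟩ := Multiset.exists_eq_cons_of_cons_eq_cons_of_ne hX'.symm (by simp)
    exact botL ..
  | andL _ ih =>
    obtain ⟨u, rfl, rfl⟩ := Multiset.exists_eq_cons_of_cons_eq_cons_of_ne hX'.symm (by simp)
    exact andL (ih hxy (by simp_all) (by simp only [Multiset.cons_swap]))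
  | andR _ _ ih₁ ih₂ => exact andR (ih₁ hxy hx hX') (ih₂ hxy hx hX')
  | orL _ _ ih₁ ih₂ =>
    obtain ⟨u, rfl, rfl⟩ := Multiset.exists_eq_cons_of_cons_eq_cons_of_ne hX'.symm (by simp)
    exact orL (ih₁ hxy (by simp_all) (Multiset.cons_swap _ _ _))
      (ih₂ hxy (by simp_all) (Multiset.cons_swap _ _ _))
  | orR _ ih => exact orR (ih hxy hx hX')
  | impL _ _ ih₁ ih₂ =>
    obtain ⟨u, rfl, rfl⟩ := Multiset.exists_eq_cons_of_cons_eq_cons_of_ne hX'.symm (by simp)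
    exact impL (ih₁ hxy (by simp_all) rfl) (ih₂ hxy (by simp_all) (Multiset.cons_swap _ _ _))
  | impR _ ih =>
    subst hX'
    exact impR (ih hxy (Multiset.mem_cons_of_mem hx) (Multiset.cons_swap _ _ _))
  | boxL hi' _ ih =>
    rcases Multiset.cons_eq_cons.1 hX'.symm with ⟨hp, rfl⟩ | ⟨hp, u, rfl, rfl⟩
    · -- `y : □_i A` is principal, used along some `y R_i z`
      obtain ⟨rfl, rfl, rfl⟩ : _ ∧ _ ∧ _ := by simpa using hp
      exact boxL_of_rel_comp hi hj hle h4 hxy hx (ih hxy (Multiset.mem_cons_of_mem hx) rfl)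
    · refine boxL hi' (ih hxy ?_ (by simp only [Multiset.cons_swap]))
      rw [Multiset.cons_swap]
      exact Multiset.mem_cons_of_mem hx
  | boxR y' hi' hne hy _ ih =>
    subst hX'
    exact boxR y' hi' hne hy.of_cons_ante (ih (Multiset.mem_cons_of_mem hxy) hx rfl)
  | refl i' x' hi' ht _ ih => exact refl i' x' hi' ht (ih (Multiset.mem_cons_of_mem hxy) hx hX')
  | trans hi' h4' _ ih => exact trans hi' h4' (ih (Multiset.mem_cons_of_mem hxy) hx hX')
  | ser i' x' y' hi' hd hne hy _ ih =>
    subst hX'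
    exact ser i' x' y' hi' hd hne hy.of_cons_ante (ih (Multiset.mem_cons_of_mem hxy) hx rfl)
  | int hi' hj' hle' _ ih =>
    refine int hi' hj' hle' (ih ?_ hx hX')
    rw [Multiset.cons_swap]
    exact Multiset.mem_cons_of_mem hxy

end G3mm

/-- For `j ⪯ i` with `4 ∈ F(i)`, the rule `TL(4_{ij})` is derivable in
`G3mm`: if `R, xR_jy, X, x:□_iA, y:□_iA ⊢ Y` is derivable in `G3mm`, then
`R, xR_jy, X, x:□_iA ⊢ Y` is derivable in `G3mm`. -/
theorem G3mm_TL_four_derivable :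
    ∀ (D : SDM) (i j : ℕ), i ∈ D.N → j ∈ D.N → D.le j i → MAx.four ∈ D.F i →
      ∀ (R : MRel) (X Y : MCtx) (x y : ℕ) (A : MForm),
        G3mm D ((j, x, y) ::ₘ R) ((x, MForm.box i A) ::ₘ (y, MForm.box i A) ::ₘ X) Y →
        G3mm D ((j, x, y) ::ₘ R) ((x, MForm.box i A) ::ₘ X) Y := by
  intro D i j hi hj hle h4 R X Y x y A h
  exact G3mm.of_cons_box_of_rel hi hj hle h4 (Multiset.cons_swap _ _ X ▸ h)
    (Multiset.mem_cons_self _ _) (Multiset.mem_cons_self _ _)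
end
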